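/- Redundant frames (case with an innermost break frame): with E ranging over ⟦·⟧_brk and scoped blocks {·}_{L_i}^{N''} with dom(L₁) ⊆ .. ⊆ dom(L_n), if the innermost context E₁ of the nesting E_m[..E₁[·]..] is ⟦·⟧_brk, then ⟨E₁[{S}_{L₁}^{N''}] | G; L; N⟩ →* ⟨𝕄 | G'; L'; N'⟩ if and only if ⟨E_m[..E₁[{S}_{L₁}^{N''}]..] | G; L; N⟩ →* ⟨𝕄 | G'; L'; N'⟩. -/
import Mathlib


namespace Yul

abbrev Var := String

/-- Yul operational syntax: source-level statements and expressions merged with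
    runtime constructs (modes, scoped blocks, break/continue frames, call frames, tuples). -/
inductive Term (Val Op Ext : Type) : Type where
  | block (ss : List (Term Val Op Ext))
  | fundef (f : Var) (ps rs : List Var) (body : Term Val Op Ext)
  | letdecl (xs : List Var) (e : Term Val Op Ext)
  | assign (xs : List Var) (e : Term Val Op Ext)
  | ite (cond : Term Val Op Ext) (body : Term Val Op Ext)
  | switch (scrut : Term Val Op Ext) (cases : List (Val × Term Val Op Ext))
      (dflt : Term Val Op Ext)
  | forloop (init cond post body : Term Val Op Ext)
  | brk
  | cont
  | leave
  | call (f : Var) (args : List (Term Val Op Ext))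
  | opcall (op : Op) (args : List (Term Val Op Ext))
  | var (x : Var)
  | val (v : Val)
  | regular
  | ext (m : Ext)
  | tuple (vs : List Val)
  | scopedBlock (ss : List (Term Val Op Ext)) (Lsave : Var → Option Val)
      (Nsave : Var → Option (List Var × List Var × Term Val Op Ext))
  | brkFrame (s : Term Val Op Ext)
  | cntFrame (s : Term Val Op Ext)
  | callFrame (s : Term Val Op Ext) (Lsave : Var → Option Val) (rets : List Var)

/-- Local variable stores. -/
abbrev Store (Val : Type) := Var → Option Val

/-- Function namespaces. -/
abbrev NS (Val Op Ext : Type) := Var → Option (List Var × List Var × Term Val Op Ext)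

variable {Val Op Ext Gl : Type}

def Dom (L : Store Val) : Set Var := {x | (L x).isSome}

/-- `restrict L1 L` is `L1 ↾ L` : restriction of `L1` to the domain of `L`. -/
def restrict (L1 L : Store Val) : Store Val :=
  fun x => if (L x).isSome then L1 x else none

def updStore (L : Store Val) (x : Var) (v : Val) : Store Val :=
  fun y => if y = x then some v else L y

def updMany (L : Store Val) (xs : List Var) (vs : List Val) : Store Val :=
  (List.zip xs vs).foldl (fun L p => updStore L p.1 p.2) L

def emptyStore : Store Val := fun _ => none

def updNS (N : NS Val Op Ext) (f : Var)
    (d : List Var × List Var × Term Val Op Ext) : NS Val Op Ext :=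
  fun y => if y = f then some d else N y

/-- `funsof`: extend the namespace with the functions defined at the top level of a block. -/
def extendFuns (ss : List (Term Val Op Ext)) (N : NS Val Op Ext) : NS Val Op Ext :=
  ss.foldl (fun N s =>
    match s with
    | .fundef f ps rs body => updNS N f (ps, rs, body)
    | _ => N) N

/-- Return-value packaging: `⟨⟩ = regular`, `⟨v⟩ = v`, `⟨v⃗⟩` a tuple for more values. -/
def mkRet (vs : List Val) : Term Val Op Ext :=
  match vs with
  | [] => .regular
  | [v] => .val v
  | vs => .tuple vs

/-- A Yul dialect: truth/falsehood of values, the default value, and the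
    (possibly failing) opcode evaluation relation `⇓_opc`. -/
structure Dialect (Val Op Ext Gl : Type) where
  isTrue : Val → Prop
  isFalse : Val → Prop
  zero : Val
  opc : Op → List Val → Gl → (List Val ⊕ Ext) → Gl → Prop

def IsIrregularCore (t : Term Val Op Ext) : Prop :=
  t = .brk ∨ t = .cont ∨ t = .leave

/-- The modes `regular`, `break`, `continue`, `leave`. -/
def IsModeCore (t : Term Val Op Ext) : Prop :=
  t = .regular ∨ t = .brk ∨ t = .cont ∨ t = .leave

/-- All modes, including external irregular modes ℳ. -/
def IsMode (t : Term Val Op Ext) : Prop :=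
  IsModeCore t ∨ ∃ m, t = .ext m

/-- Results of completed expressions/calls: a value, a tuple, or `regular`. -/
def IsRet (t : Term Val Op Ext) : Prop :=
  (∃ v, t = .val v) ∨ (∃ vs, t = .tuple vs) ∨ t = .regular

/-- `S_ret ::= v | ⟨v⃗⟩ | 𝕄`. -/
def IsRetAny (t : Term Val Op Ext) : Prop := IsRet t ∨ IsModeCore t

/-- Evaluation contexts. -/
inductive Ctx (Val Op Ext : Type) : Type where
  | hole
  | scopedC (E : Ctx Val Op Ext) (rest : List (Term Val Op Ext)) (L : Store Val)
      (N : NS Val Op Ext)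
  | letC (xs : List Var) (E : Ctx Val Op Ext)
  | assignC (xs : List Var) (E : Ctx Val Op Ext)
  | cntC (E : Ctx Val Op Ext)
  | brkC (E : Ctx Val Op Ext)
  | iteC (E : Ctx Val Op Ext) (body : Term Val Op Ext)
  | switchC (E : Ctx Val Op Ext) (cases : List (Val × Term Val Op Ext))
      (dflt : Term Val Op Ext)
  | callC (f : Var) (before : List (Term Val Op Ext)) (E : Ctx Val Op Ext)
      (after : List Val)
  | opcallC (op : Op) (before : List (Term Val Op Ext)) (E : Ctx Val Op Ext)
      (after : List Val)
  | frameC (E : Ctx Val Op Ext) (L : Store Val) (rets : List Var)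

def plug (E : Ctx Val Op Ext) (t : Term Val Op Ext) : Term Val Op Ext :=
  match E with
  | .hole => t
  | .scopedC E rest L N => .scopedBlock (plug E t :: rest) L N
  | .letC xs E => .letdecl xs (plug E t)
  | .assignC xs E => .assign xs (plug E t)
  | .cntC E => .cntFrame (plug E t)
  | .brkC E => .brkFrame (plug E t)
  | .iteC E body => .ite (plug E t) body
  | .switchC E cs d => .switch (plug E t) cs d
  | .callC f before E after => .call f (before ++ plug E t :: after.map Term.val)
  | .opcallC op before E after => .opcall op (before ++ plug E t :: after.map Term.val)
  | .frameC E L rets => .callFrame (plug E t) L rets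

/-- Base small-step reduction rules of Yul. -/
inductive Base (D : Dialect Val Op Ext Gl) :
    Term Val Op Ext → Gl → Store Val → NS Val Op Ext →
    Term Val Op Ext → Gl → Store Val → NS Val Op Ext → Prop where
  | blockEnter (ss G L N) (h : ss ≠ []) :
      Base D (.block ss) G L N (.scopedBlock ss L N) G L (extendFuns ss N)
  | blockEmpty (G L N) :
      Base D (.block []) G L N .regular G L N
  | scopedNext (ss L0 N0 G L N) (h : ss ≠ []) :
      Base D (.scopedBlock (.regular :: ss) L0 N0) G L N (.scopedBlock ss L0 N0) G L N
  | scopedExitReg (L0 N0 G L N) :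
      Base D (.scopedBlock [.regular] L0 N0) G L N .regular G (restrict L L0) N0
  | scopedExitIrr (m ss L0 N0 G L N) (h : IsIrregularCore m) :
      Base D (.scopedBlock (m :: ss) L0 N0) G L N m G (restrict L L0) N0
  | fundefSkip (f ps rs body G L N) :
      Base D (.fundef f ps rs body) G L N .regular G L N
  | letSingle (x v G L N) (h : L x = none) :
      Base D (.letdecl [x] (.val v)) G L N .regular G (updStore L x v) N
  | letTuple (xs vs G L N) (hlen : xs.length = vs.length)
      (hfresh : ∀ x ∈ xs, L x = none) :
      Base D (.letdecl xs (.tuple vs)) G L N .regular G (updMany L xs vs) N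
  | assignSingle (x v G L N) (h : (L x).isSome) :
      Base D (.assign [x] (.val v)) G L N .regular G (updStore L x v) N
  | assignTuple (xs vs G L N) (hlen : xs.length = vs.length)
      (hdom : ∀ x ∈ xs, (L x).isSome) :
      Base D (.assign xs (.tuple vs)) G L N .regular G (updMany L xs vs) N
  | iteFalse (v body G L N) (h : D.isFalse v) :
      Base D (.ite (.val v) body) G L N .regular G L N
  | iteTrue (v body G L N) (h : D.isTrue v) :
      Base D (.ite (.val v) body) G L N body G L N
  | switchDefault (v cs d G L N) (h : ∀ c ∈ cs, c.1 ≠ v) :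
      Base D (.switch (.val v) cs d) G L N d G L N
  | switchCase (c body pre post d G L N) (h : ∀ p ∈ pre, p.1 ≠ c) :
      Base D (.switch (.val c) (pre ++ (c, body) :: post) d) G L N body G L N
  | forInit (ss M Sp Sb G L N) (h : ss ≠ []) :
      Base D (.forloop (.block ss) M Sp Sb) G L N
        (.block (ss ++ [.forloop (.block []) M Sp Sb])) G L N
  | forUnfold (M Sp Sb G L N) :
      Base D (.forloop (.block []) M Sp Sb) G L N
        (.brkFrame (.ite M
          (.block [.cntFrame Sb, Sp, .forloop (.block []) M Sp Sb]))) G L N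
  | cntPass (m G L N) (h : m = .regular ∨ m = .brk ∨ m = .leave) :
      Base D (.cntFrame m) G L N m G L N
  | cntCatch (G L N) :
      Base D (.cntFrame .cont) G L N .regular G L N
  | brkPass (m G L N) (h : m = .regular ∨ m = .leave) :
      Base D (.brkFrame m) G L N m G L N
  | brkCatch (G L N) :
      Base D (.brkFrame .brk) G L N .regular G L N
  | varLookup (x v G L N) (h : L x = some v) :
      Base D (.var x) G L N (.val v) G L N
  | callEnter (f vs ps rs body G L N) (hN : N f = some (ps, rs, body))
      (hlen : ps.length = vs.length) :
      Base D (.call f (vs.map Term.val)) G L N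
        (.callFrame body L rs) G
        (updMany (updMany emptyStore rs (rs.map fun _ => D.zero)) ps vs) N
  | frameExit (m Lsave rs ws G L N) (hm : m = .leave ∨ m = .regular)
      (hws : List.Forall₂ (fun z w => L z = some w) rs ws) :
      Base D (.callFrame m Lsave rs) G L N (mkRet ws) G Lsave N
  | opcallOk (op vs ws G G' L N) (h : D.opc op vs G (Sum.inl ws) G') :
      Base D (.opcall op (vs.map Term.val)) G L N (mkRet ws) G' L N
  | opcallErr (op vs m G G' L N) (h : D.opc op vs G (Sum.inr m) G') :
      Base D (.opcall op (vs.map Term.val)) G L N (.ext m) G' L N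

/-- Configurations `⟨S | G; L; N⟩`. -/
abbrev Config (Val Op Ext Gl : Type) :=
  Term Val Op Ext × Gl × Store Val × NS Val Op Ext

/-- The small-step relation: base rules closed under evaluation contexts,
    plus the top-level propagation of external irregular modes. -/
inductive Step (D : Dialect Val Op Ext Gl) :
    Config Val Op Ext Gl → Config Val Op Ext Gl → Prop where
  | ctx (E S G L N S' G' L' N') (h : Base D S G L N S' G' L' N') :
      Step D (plug E S, G, L, N) (plug E S', G', L', N')
  | extProp (E m G L N) (h : E ≠ Ctx.hole) :
      Step D (plug E (.ext m), G, L, N) (.ext m, G, L, N)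

/-- Zero or more small steps. -/
abbrev Steps (D : Dialect Val Op Ext Gl) :
    Config Val Op Ext Gl → Config Val Op Ext Gl → Prop :=
  Relation.ReflTransGen (Step D)

mutual
/-- Big-step evaluation of statements `⟨S | G; L; N⟩ ⇓ ⟨𝕄 | G'; L'; N'⟩`. -/
inductive Big (D : Dialect Val Op Ext Gl) :
    Term Val Op Ext → Gl → Store Val → NS Val Op Ext →
    Term Val Op Ext → Gl → Store Val → NS Val Op Ext → Prop where
  | blockB {ss M G L N G1 L1}
      (h : BigSeq D ss G L (extendFuns ss N) M G1 L1 (extendFuns ss N)) :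
      Big D (.block ss) G L N M G1 (restrict L1 L) N
  | fundefB {f ps rs body G L N} :
      Big D (.fundef f ps rs body) G L N .regular G L N
  | brkB {G L N} : Big D .brk G L N .brk G L N
  | contB {G L N} : Big D .cont G L N .cont G L N
  | leaveB {G L N} : Big D .leave G L N .leave G L N
  | letSingleB {x e v G L N G1 L1}
      (h1 : BigExp D e G L N (.val v) G1 L1 N) (h2 : L x = none) :
      Big D (.letdecl [x] e) G L N .regular G1 (updStore L1 x v) N
  | letTupleB {xs e vs G L N G1 L1}
      (h1 : BigExp D e G L N (.tuple vs) G1 L1 N)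
      (hlen : xs.length = vs.length) (hfresh : ∀ x ∈ xs, L x = none) :
      Big D (.letdecl xs e) G L N .regular G1 (updMany L1 xs vs) N
  | assignSingleB {x e v G L N G1 L1}
      (h1 : BigExp D e G L N (.val v) G1 L1 N) (h2 : (L x).isSome) :
      Big D (.assign [x] e) G L N .regular G1 (updStore L1 x v) N
  | assignTupleB {xs e vs G L N G1 L1}
      (h1 : BigExp D e G L N (.tuple vs) G1 L1 N)
      (hlen : xs.length = vs.length) (hdom : ∀ x ∈ xs, (L x).isSome) :
      Big D (.assign xs e) G L N .regular G1 (updMany L1 xs vs) N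
  | exprB {M G L N G' L'}
      (h : BigExp D M G L N .regular G' L' N) :
      Big D M G L N .regular G' L' N
  | ifF {M body v G L N G0 L0}
      (h1 : BigExp D M G L N (.val v) G0 L0 N) (h2 : D.isFalse v) :
      Big D (.ite M body) G L N .regular G0 L0 N
  | ifT {M body v MM G L N G0 L0 G1 L1}
      (h1 : BigExp D M G L N (.val v) G0 L0 N) (h2 : D.isTrue v)
      (h3 : Big D body G0 L0 N MM G1 L1 N) :
      Big D (.ite M body) G L N MM G1 L1 N
  | swD {M cs d v MM G L N G0 L0 G1 L1}
      (h1 : BigExp D M G L N (.val v) G0 L0 N)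
      (h2 : ∀ c ∈ cs, c.1 ≠ v)
      (h3 : Big D d G0 L0 N MM G1 L1 N) :
      Big D (.switch M cs d) G L N MM G1 L1 N
  | swC {M pre c body post d MM G L N G0 L0 G1 L1}
      (h1 : BigExp D M G L N (.val c) G0 L0 N)
      (hpre : ∀ p ∈ pre, p.1 ≠ c)
      (h3 : Big D body G0 L0 N MM G1 L1 N) :
      Big D (.switch M (pre ++ (c, body) :: post) d) G L N MM G1 L1 N
  | forInitB {ss M Sp Sb MM G L N G2 L2} (hne : ss ≠ [])
      (h : Big D (.block (ss ++ [.forloop (.block []) M Sp Sb])) G L N MM G2 L2 N) :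
      Big D (.forloop (.block ss) M Sp Sb) G L N MM G2 L2 N
  | forFalseB {M Sp Sb v G L N G1 L1}
      (h1 : BigExp D M G L N (.val v) G1 L1 N) (h2 : D.isFalse v) :
      Big D (.forloop (.block []) M Sp Sb) G L N .regular G1 L1 N
  | forHalt1B {M Sp Sb v Mlb Mout G L N G1 L1 G2 L2}
      (h1 : BigExp D M G L N (.val v) G1 L1 N) (h2 : D.isTrue v)
      (h3 : Big D Sb G1 L1 N Mlb G2 L2 N)
      (h4 : (Mlb = .leave ∧ Mout = .leave) ∨ (Mlb = .brk ∧ Mout = .regular)) :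
      Big D (.forloop (.block []) M Sp Sb) G L N Mout G2 L2 N
  | forHalt2B {M Sp Sb v MM G L N G1 L1 G2 L2 G3 L3}
      (h1 : BigExp D M G L N (.val v) G1 L1 N) (h2 : D.isTrue v)
      (h3 : Big D Sb G1 L1 N MM G2 L2 N)
      (h4 : MM = .regular ∨ MM = .cont)
      (h5 : Big D Sp G2 L2 N .leave G3 L3 N) :
      Big D (.forloop (.block []) M Sp Sb) G L N .leave G3 L3 N
  | forLoopB {M Sp Sb v MM MM' G L N G1 L1 G2 L2 G3 L3 G4 L4}
      (h1 : BigExp D M G L N (.val v) G1 L1 N) (h2 : D.isTrue v)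
      (h3 : Big D Sb G1 L1 N MM G2 L2 N)
      (h4 : MM = .regular ∨ MM = .cont)
      (h5 : Big D Sp G2 L2 N .regular G3 L3 N)
      (h6 : Big D (.forloop (.block []) M Sp Sb) G3 L3 N MM' G4 L4 N) :
      Big D (.forloop (.block []) M Sp Sb) G L N MM' G4 L4 N

/-- Big-step evaluation of statement sequences `⇓_seq`. -/
inductive BigSeq (D : Dialect Val Op Ext Gl) :
    List (Term Val Op Ext) → Gl → Store Val → NS Val Op Ext →
    Term Val Op Ext → Gl → Store Val → NS Val Op Ext → Prop where
  | nilB {G L N} : BigSeq D [] G L N .regular G L N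
  | consReg {s ss MM G L N G1 L1 G2 L2}
      (h1 : Big D s G L N .regular G1 L1 N)
      (h2 : BigSeq D ss G1 L1 N MM G2 L2 N) :
      BigSeq D (s :: ss) G L N MM G2 L2 N
  | consIrr {s ss MM G L N G1 L1}
      (h1 : Big D s G L N MM G1 L1 N) (h2 : IsIrregularCore MM) :
      BigSeq D (s :: ss) G L N MM G1 L1 N

/-- Big-step evaluation of expressions `⇓_exp`. -/
inductive BigExp (D : Dialect Val Op Ext Gl) :
    Term Val Op Ext → Gl → Store Val → NS Val Op Ext →
    Term Val Op Ext → Gl → Store Val → NS Val Op Ext → Prop where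
  | identB {x v G L N} (h : L x = some v) :
      BigExp D (.var x) G L N (.val v) G L N
  | valB {v G L N} : BigExp D (.val v) G L N (.val v) G L N
  | funCallB {f args vs ps rs body MM ws G L N Gn Ln G'' L''}
      (hargs : BigArgs D args G L N vs Gn Ln)
      (hN : N f = some (ps, rs, body))
      (hlen : ps.length = vs.length)
      (hbody : Big D body Gn
        (updMany (updMany emptyStore rs (rs.map fun _ => D.zero)) ps vs) N MM G'' L'' N)
      (hret : List.Forall₂ (fun z w => L'' z = some w) rs ws) :
      BigExp D (.call f args) G L N (mkRet ws) G'' Ln N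
  | opCallB {op args vs ws G L N Gn Ln G''}
      (hargs : BigArgs D args G L N vs Gn Ln)
      (h : D.opc op vs Gn (Sum.inl ws) G'') :
      BigExp D (.opcall op args) G L N (mkRet ws) G'' Ln N

/-- Right-to-left evaluation of argument lists. -/
inductive BigArgs (D : Dialect Val Op Ext Gl) :
    List (Term Val Op Ext) → Gl → Store Val → NS Val Op Ext →
    List Val → Gl → Store Val → Prop where
  | nilA {G L N} : BigArgs D [] G L N [] G L
  | consA {M Ms v vs G L N G1 L1 G2 L2}
      (htail : BigArgs D Ms G L N vs G1 L1)
      (hhead : BigExp D M G1 L1 N (.val v) G2 L2 N) :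
      BigArgs D (M :: Ms) G L N (v :: vs) G2 L2
end

/-- Source-level syntax: no runtime constructs. -/
inductive IsSource : Term Val Op Ext → Prop where
  | block {ss} (h : ∀ s ∈ ss, IsSource s) : IsSource (.block ss)
  | fundef {f ps rs body} (h : IsSource body) : IsSource (.fundef f ps rs body)
  | letdecl {xs e} (h : IsSource e) : IsSource (.letdecl xs e)
  | assign {xs e} (h : IsSource e) : IsSource (.assign xs e)
  | ite {c b} (h1 : IsSource c) (h2 : IsSource b) : IsSource (.ite c b)
  | switch {M cs d} (h1 : IsSource M) (h2 : ∀ c ∈ cs, IsSource c.2)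
      (h3 : IsSource d) : IsSource (.switch M cs d)
  | forloop {i c p b} (h1 : IsSource i) (h2 : IsSource c) (h3 : IsSource p)
      (h4 : IsSource b) : IsSource (.forloop i c p b)
  | brk : IsSource .brk
  | cont : IsSource .cont
  | leave : IsSource .leave
  | call {f args} (h : ∀ a ∈ args, IsSource a) : IsSource (.call f args)
  | opcall {op args} (h : ∀ a ∈ args, IsSource a) : IsSource (.opcall op args)
  | var {x} : IsSource (.var x)
  | val {v} : IsSource (.val v)

/-- Syntactic restriction on halting statements: `HaltOK inLoop inFun S` says that
    every `break`/`continue` in `S` occurs inside the body of some enclosing for-loop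
    (not separated from it by a function definition) and every `leave` occurs inside
    some enclosing function body; `inLoop`/`inFun` record the ambient context. -/
inductive HaltOK : Bool → Bool → Term Val Op Ext → Prop where
  | block {il fn ss} (h : ∀ s ∈ ss, HaltOK il fn s) : HaltOK il fn (.block ss)
  | fundef {il fn f ps rs body} (h : HaltOK false true body) :
      HaltOK il fn (.fundef f ps rs body)
  | letdecl {il fn xs e} (h : HaltOK il fn e) : HaltOK il fn (.letdecl xs e)
  | assign {il fn xs e} (h : HaltOK il fn e) : HaltOK il fn (.assign xs e)
  | ite {il fn c b} (h1 : HaltOK il fn c) (h2 : HaltOK il fn b) :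
      HaltOK il fn (.ite c b)
  | switch {il fn M cs d} (h1 : HaltOK il fn M) (h2 : ∀ c ∈ cs, HaltOK il fn c.2)
      (h3 : HaltOK il fn d) : HaltOK il fn (.switch M cs d)
  | forloop {il fn i c p b} (h1 : HaltOK il fn i) (h2 : HaltOK il fn c)
      (h3 : HaltOK il fn p) (h4 : HaltOK true fn b) :
      HaltOK il fn (.forloop i c p b)
  | brk {fn} : HaltOK true fn .brk
  | cont {fn} : HaltOK true fn .cont
  | leave {il} : HaltOK il true .leave
  | call {il fn f args} (h : ∀ a ∈ args, HaltOK il fn a) : HaltOK il fn (.call f args)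
  | opcall {il fn op args} (h : ∀ a ∈ args, HaltOK il fn a) :
      HaltOK il fn (.opcall op args)
  | var {il fn x} : HaltOK il fn (.var x)
  | val {il fn v} : HaltOK il fn (.val v)

/-- Frames: break-catching frames `⟦·⟧_brk` or scoped-block frames `{·}_L^N`. -/
inductive Frame (Val : Type) where
  | brkF
  | blockF (L : Store Val)

/-- Apply a list of frames (innermost first), all blocks annotated with namespace `N`. -/
def applyFrames (N : NS Val Op Ext) :
    List (Frame Val) → Term Val Op Ext → Term Val Op Ext
  | [], t => t
  | .brkF :: fs, t => applyFrames N fs (.brkFrame t)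
  | .blockF L :: fs, t => applyFrames N fs (.scopedBlock [t] L N)

/-- Ascending chain of block-frame domains, starting from `d` (innermost first). -/
def Asc (d : Set Var) : List (Frame Val) → Prop
  | [] => True
  | .brkF :: fs => Asc d fs
  | .blockF L :: fs => d ⊆ Dom L ∧ Asc (Dom L) fs


section RedundantAux

variable {Val Op Ext Gl : Type} {D : Dialect Val Op Ext Gl}

/-- Context composition: `plug (rfComp E0 E) t = plug E0 (plug E t)`. -/
def rfComp : Ctx Val Op Ext → Ctx Val Op Ext → Ctx Val Op Ext
  | .hole, E => E
  | .scopedC E0 r L N, E => .scopedC (rfComp E0 E) r L N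
  | .letC xs E0, E => .letC xs (rfComp E0 E)
  | .assignC xs E0, E => .assignC xs (rfComp E0 E)
  | .cntC E0, E => .cntC (rfComp E0 E)
  | .brkC E0, E => .brkC (rfComp E0 E)
  | .iteC E0 b, E => .iteC (rfComp E0 E) b
  | .switchC E0 cs d, E => .switchC (rfComp E0 E) cs d
  | .callC f b E0 a, E => .callC f b (rfComp E0 E) a
  | .opcallC op b E0 a, E => .opcallC op b (rfComp E0 E) a
  | .frameC E0 L r, E => .frameC (rfComp E0 E) L r

lemma rf_plug_comp (E0 E : Ctx Val Op Ext) (t : Term Val Op Ext) :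
    plug (rfComp E0 E) t = plug E0 (plug E t) := by
  induction E0 <;> simp [rfComp, plug, *]

lemma rf_comp_ne_hole {E0 : Ctx Val Op Ext} (h : E0 ≠ .hole) (E : Ctx Val Op Ext) :
    rfComp E0 E ≠ .hole := by
  cases E0 <;> simp [rfComp] at h ⊢

lemma rf_mode_plug {MM : Term Val Op Ext} (hM : IsMode MM) {E : Ctx Val Op Ext}
    {S : Term Val Op Ext} (h : plug E S = MM) : E = .hole ∧ S = MM := by
  rcases hM with (rfl | rfl | rfl | rfl) | ⟨m, rfl⟩ <;>
    cases E <;> simp [plug] at h ⊢ <;> exact h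

lemma rf_mode_of_rl {M0 : Term Val Op Ext} (hm : M0 = Term.regular ∨ M0 = Term.leave) :
    IsMode M0 := by
  rcases hm with rfl | rfl
  · exact Or.inl (Or.inl rfl)
  · exact Or.inl (Or.inr (Or.inr (Or.inr rfl)))

lemma rf_mode_of_irr {M0 : Term Val Op Ext} (h : IsIrregularCore M0) : IsMode M0 := by
  rcases h with rfl | rfl | rfl
  · exact Or.inl (Or.inr (Or.inl rfl))
  · exact Or.inl (Or.inr (Or.inr (Or.inl rfl)))
  · exact Or.inl (Or.inr (Or.inr (Or.inr rfl)))

lemma rf_step_inv {c c' : Config Val Op Ext Gl} (h : Step D c c') :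
    (∃ E S G L N S' G' L' N', c = (plug E S, G, L, N) ∧ c' = (plug E S', G', L', N') ∧
      Base D S G L N S' G' L' N') ∨
    (∃ E m G L N, E ≠ Ctx.hole ∧ c = (plug E (.ext m), G, L, N) ∧ c' = (.ext m, G, L, N)) := by
  cases h with
  | ctx E S G L N S' G' L' N' hb => exact Or.inl ⟨E, S, G, L, N, S', G', L', N', rfl, rfl, hb⟩
  | extProp E m G L N hne => exact Or.inr ⟨E, m, G, L, N, hne, rfl, rfl⟩

lemma rf_no_step {MM : Term Val Op Ext} (hM : IsMode MM) {G : Gl} {L : Store Val}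
    {N : NS Val Op Ext} {c' : Config Val Op Ext Gl} : ¬ Step D (MM, G, L, N) c' := by
  intro h
  rcases rf_step_inv h with ⟨E, S, G1, L1, N1, S', G1', L1', N1', heq, _, hb⟩ |
    ⟨E, m, G1, L1, N1, hne, heq, _⟩
  · simp only [Prod.mk.injEq] at heq
    obtain ⟨h1, -, -, -⟩ := heq
    obtain ⟨rfl, rfl⟩ := rf_mode_plug hM h1.symm
    rcases hM with (rfl | rfl | rfl | rfl) | ⟨m, rfl⟩ <;> cases hb
  · simp only [Prod.mk.injEq] at heq
    obtain ⟨h1, -, -, -⟩ := heq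
    obtain ⟨rfl, -⟩ := rf_mode_plug hM h1.symm
    exact hne rfl

lemma rf_steps_mode {MM : Term Val Op Ext} (hM : IsMode MM) {G : Gl} {L : Store Val}
    {N : NS Val Op Ext} {z : Config Val Op Ext Gl}
    (h : Steps D (MM, G, L, N) z) : z = (MM, G, L, N) := by
  rcases Relation.ReflTransGen.cases_head h with h1 | ⟨c, hs, _⟩
  · exact h1.symm
  · exact absurd hs (rf_no_step hM)

lemma rf_collapse (E : Ctx Val Op Ext) (m : Ext) (G : Gl) (L : Store Val)
    (N : NS Val Op Ext) :
    Steps D (plug E (.ext m), G, L, N) (.ext m, G, L, N) := by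
  by_cases hE : E = .hole
  · subst hE; exact Relation.ReflTransGen.refl
  · exact Relation.ReflTransGen.single (Step.extProp E m G L N hE)

lemma rf_lift (E0 : Ctx Val Op Ext) (h0 : E0 ≠ .hole)
    {c c' : Config Val Op Ext Gl} (h : Steps D c c') :
    Steps D (plug E0 c.1, c.2) (plug E0 c'.1, c'.2) ∨
      ((∃ m, c'.1 = Term.ext m) ∧ Steps D (plug E0 c.1, c.2) c') := by
  induction h using Relation.ReflTransGen.head_induction_on with
  | refl => exact Or.inl Relation.ReflTransGen.refl
  | head s hrest ih =>
    rcases rf_step_inv s with ⟨E, S, G, L, N, S', G', L', N', rfl, rfl, hb⟩ |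
      ⟨E, m, G, L, N, hne, rfl, rfl⟩
    · have st : Step D (plug E0 (plug E S), G, L, N) (plug E0 (plug E S'), G', L', N') := by
        rw [← rf_plug_comp, ← rf_plug_comp]
        exact Step.ctx _ _ _ _ _ _ _ _ _ hb
      rcases ih with h1 | ⟨hm, h1⟩
      · exact Or.inl (Relation.ReflTransGen.head st h1)
      · exact Or.inr ⟨hm, Relation.ReflTransGen.head st h1⟩
    · have hz := rf_steps_mode (MM := Term.ext m) (Or.inr ⟨m, rfl⟩) hrest
      subst hz
      have st : Step D (plug E0 (plug E (.ext m)), G, L, N) (.ext m, G, L, N) := by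
        rw [← rf_plug_comp]
        exact Step.extProp _ m G L N (rf_comp_ne_hole h0 E)
      exact Or.inr ⟨⟨m, rfl⟩, Relation.ReflTransGen.single st⟩

lemma rf_plug_eq_brk {E : Ctx Val Op Ext} {S X : Term Val Op Ext}
    (h : plug E S = .brkFrame X) :
    (E = .hole ∧ S = .brkFrame X) ∨ ∃ E', E = .brkC E' ∧ plug E' S = X := by
  cases E with
  | hole => exact Or.inl ⟨rfl, h⟩
  | brkC E' =>
    simp only [plug, Term.brkFrame.injEq] at h
    exact Or.inr ⟨E', rfl, h⟩
  | _ => simp [plug] at h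

lemma rf_plug_eq_scoped {E : Ctx Val Op Ext} {S X : Term Val Op Ext}
    {L1 : Store Val} {N1 : NS Val Op Ext}
    (h : plug E S = .scopedBlock [X] L1 N1) :
    (E = .hole ∧ S = .scopedBlock [X] L1 N1) ∨
      ∃ E', E = .scopedC E' [] L1 N1 ∧ plug E' S = X := by
  cases E with
  | hole => exact Or.inl ⟨rfl, h⟩
  | scopedC E' rest L N =>
    simp only [plug, Term.scopedBlock.injEq, List.cons.injEq] at h
    obtain ⟨⟨h1, rfl⟩, rfl, rfl⟩ := h
    exact Or.inr ⟨E', rfl, h1⟩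
  | _ => simp [plug] at h

/-- Inversion for break frames. -/
lemma rf_brk_inv {MM : Term Val Op Ext} {Gf : Gl} {Lf : Store Val} {Nf : NS Val Op Ext}
    (hM : IsMode MM) {c : Config Val Op Ext Gl} (h : Steps D c (MM, Gf, Lf, Nf)) :
    ∀ X G L N, c = (.brkFrame X, G, L, N) →
    ∃ M0, Steps D (X, G, L, N) (M0, Gf, Lf, Nf) ∧
      (((M0 = Term.regular ∨ M0 = Term.leave) ∧ MM = M0) ∨
       (M0 = Term.brk ∧ MM = Term.regular) ∨
       (∃ m, M0 = Term.ext m ∧ MM = M0)) := by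
  induction h using Relation.ReflTransGen.head_induction_on with
  | refl =>
    intro X G L N hc
    simp only [Prod.mk.injEq] at hc
    obtain ⟨h1, -⟩ := hc
    rcases hM with (rfl | rfl | rfl | rfl) | ⟨m, rfl⟩ <;> simp at h1
  | head s hrest ih =>
    intro X G L N hc
    subst hc
    rcases rf_step_inv s with ⟨E, S, G1, L1, N1, S', G1', L1', N1', heq, rfl, hb⟩ |
      ⟨E, m, G1, L1, N1, hne, heq, heq2⟩
    · simp only [Prod.mk.injEq] at heq
      obtain ⟨hpe, rfl, rfl, rfl⟩ := heq
      rcases rf_plug_eq_brk hpe.symm with ⟨rfl, rfl⟩ | ⟨E', rfl, hpe'⟩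
      · cases hb with
        | brkPass m _ _ _ hm =>
          have hz := rf_steps_mode (MM := X) (rf_mode_of_rl hm) hrest
          simp only [Prod.mk.injEq] at hz
          obtain ⟨rfl, rfl, rfl, rfl⟩ := hz
          exact ⟨MM, Relation.ReflTransGen.refl, Or.inl ⟨hm, rfl⟩⟩
        | brkCatch =>
          have hz := rf_steps_mode (MM := (Term.regular : Term Val Op Ext))
            (Or.inl (Or.inl rfl)) hrest
          simp only [Prod.mk.injEq] at hz
          obtain ⟨rfl, rfl, rfl, rfl⟩ := hz
          exact ⟨Term.brk, Relation.ReflTransGen.refl, Or.inr (Or.inl ⟨rfl, rfl⟩)⟩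
      · obtain ⟨M0, hst, hcase⟩ := ih (plug E' S') G1' L1' N1' rfl
        refine ⟨M0, Relation.ReflTransGen.head ?_ hst, hcase⟩
        rw [← hpe']
        exact Step.ctx E' S _ _ _ S' _ _ _ hb
    · simp only [Prod.mk.injEq] at heq heq2
      obtain ⟨hpe, rfl, rfl, rfl⟩ := heq
      rcases rf_plug_eq_brk hpe.symm with ⟨-, hS⟩ | ⟨E', rfl, hpe'⟩
      · simp at hS
      · obtain ⟨rfl, rfl, rfl, rfl⟩ := heq2
        have hz := rf_steps_mode (MM := Term.ext m) (Or.inr ⟨m, rfl⟩) hrest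
        simp only [Prod.mk.injEq] at hz
        obtain ⟨rfl, rfl, rfl, rfl⟩ := hz
        exact ⟨Term.ext m, by rw [← hpe']; exact rf_collapse E' m _ _ _,
          Or.inr (Or.inr ⟨m, rfl, rfl⟩)⟩

lemma rf_brk_inv' {X MM : Term Val Op Ext} {G Gf : Gl} {L Lf : Store Val}
    {N Nf : NS Val Op Ext} (hM : IsMode MM)
    (h : Steps D (.brkFrame X, G, L, N) (MM, Gf, Lf, Nf)) :
    ∃ M0, Steps D (X, G, L, N) (M0, Gf, Lf, Nf) ∧
      (((M0 = Term.regular ∨ M0 = Term.leave) ∧ MM = M0) ∨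
       (M0 = Term.brk ∧ MM = Term.regular) ∨
       (∃ m, M0 = Term.ext m ∧ MM = M0)) :=
  rf_brk_inv hM h X G L N rfl

/-- Inversion for singleton scoped blocks. -/
lemma rf_scoped_inv {MM : Term Val Op Ext} {Gf : Gl} {Lf L1 : Store Val}
    {Nf N1 : NS Val Op Ext}
    (hM : IsMode MM) {c : Config Val Op Ext Gl} (h : Steps D c (MM, Gf, Lf, Nf)) :
    ∀ X G L N, c = (.scopedBlock [X] L1 N1, G, L, N) →
    ∃ M0 G0 L0 N0, Steps D (X, G, L, N) (M0, G0, L0, N0) ∧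
      ((M0 = Term.regular ∧ MM = M0 ∧ Gf = G0 ∧ Lf = restrict L0 L1 ∧ Nf = N1) ∨
       (IsIrregularCore M0 ∧ MM = M0 ∧ Gf = G0 ∧ Lf = restrict L0 L1 ∧ Nf = N1) ∨
       (∃ m, M0 = Term.ext m ∧ MM = M0 ∧ Gf = G0 ∧ Lf = L0 ∧ Nf = N0)) := by
  induction h using Relation.ReflTransGen.head_induction_on with
  | refl =>
    intro X G L N hc
    simp only [Prod.mk.injEq] at hc
    obtain ⟨h1, -⟩ := hc
    rcases hM with (rfl | rfl | rfl | rfl) | ⟨m, rfl⟩ <;> simp at h1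
  | head s hrest ih =>
    intro X G L N hc
    subst hc
    rcases rf_step_inv s with ⟨E, S, G1, L1', N1', S', G1', L1'', N1'', heq, rfl, hb⟩ |
      ⟨E, m, G1, L1', N1', hne, heq, heq2⟩
    · simp only [Prod.mk.injEq] at heq
      obtain ⟨hpe, rfl, rfl, rfl⟩ := heq
      rcases rf_plug_eq_scoped hpe.symm with ⟨rfl, rfl⟩ | ⟨E', rfl, hpe'⟩
      · cases hb with
        | scopedNext ss _ _ _ _ _ hne => exact absurd rfl hne
        | scopedExitReg =>
          have hz := rf_steps_mode (MM := (Term.regular : Term Val Op Ext))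
            (Or.inl (Or.inl rfl)) hrest
          simp only [Prod.mk.injEq] at hz
          obtain ⟨rfl, rfl, rfl, rfl⟩ := hz
          exact ⟨Term.regular, _, _, _, Relation.ReflTransGen.refl,
            Or.inl ⟨rfl, rfl, rfl, rfl, rfl⟩⟩
        | scopedExitIrr m ss _ _ _ _ _ hm =>
          have hz := rf_steps_mode (MM := X) (rf_mode_of_irr hm) hrest
          simp only [Prod.mk.injEq] at hz
          obtain ⟨rfl, rfl, rfl, rfl⟩ := hz
          exact ⟨MM, _, _, _, Relation.ReflTransGen.refl,
            Or.inr (Or.inl ⟨hm, rfl, rfl, rfl, rfl⟩)⟩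
      · obtain ⟨M0, G0, L0, N0, hst, hcase⟩ := ih (plug E' S') G1' L1'' N1'' rfl
        refine ⟨M0, G0, L0, N0, Relation.ReflTransGen.head ?_ hst, hcase⟩
        rw [← hpe']
        exact Step.ctx E' S _ _ _ S' _ _ _ hb
    · simp only [Prod.mk.injEq] at heq heq2
      obtain ⟨hpe, rfl, rfl, rfl⟩ := heq
      rcases rf_plug_eq_scoped hpe.symm with ⟨-, hS⟩ | ⟨E', rfl, hpe'⟩
      · simp at hS
      · obtain ⟨rfl, rfl, rfl, rfl⟩ := heq2
        have hz := rf_steps_mode (MM := Term.ext m) (Or.inr ⟨m, rfl⟩) hrest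
        simp only [Prod.mk.injEq] at hz
        obtain ⟨rfl, rfl, rfl, rfl⟩ := hz
        exact ⟨Term.ext m, _, _, _, by rw [← hpe']; exact rf_collapse E' m _ _ _,
          Or.inr (Or.inr ⟨m, rfl, rfl, rfl, rfl, rfl⟩)⟩

lemma rf_scoped_inv' {X MM : Term Val Op Ext} {G Gf : Gl} {L Lf L1 : Store Val}
    {N Nf N1 : NS Val Op Ext} (hM : IsMode MM)
    (h : Steps D (.scopedBlock [X] L1 N1, G, L, N) (MM, Gf, Lf, Nf)) :
    ∃ M0 G0 L0 N0, Steps D (X, G, L, N) (M0, G0, L0, N0) ∧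
      ((M0 = Term.regular ∧ MM = M0 ∧ Gf = G0 ∧ Lf = restrict L0 L1 ∧ Nf = N1) ∨
       (IsIrregularCore M0 ∧ MM = M0 ∧ Gf = G0 ∧ Lf = restrict L0 L1 ∧ Nf = N1) ∨
       (∃ m, M0 = Term.ext m ∧ MM = M0 ∧ Gf = G0 ∧ Lf = L0 ∧ Nf = N0)) :=
  rf_scoped_inv hM h X G L N rfl

lemma rf_dom_restrict (A B : Store Val) : Dom (restrict A B) ⊆ Dom B := by
  intro x hx
  simp only [Dom, restrict, Set.mem_setOf_eq] at hx ⊢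
  by_cases h : (B x).isSome
  · exact h
  · simp [h] at hx

lemma rf_restrict_self {A B : Store Val} (h : Dom A ⊆ Dom B) : restrict A B = A := by
  funext x
  simp only [restrict]
  by_cases hb : (B x).isSome
  · simp [hb]
  · simp only [hb, if_false]
    by_cases ha : (A x).isSome
    · exact absurd (h ha) hb
    · simp only [Option.isSome_iff_exists] at ha
      push_neg at ha
      cases hax : A x with
      | none => rfl
      | some v => exact absurd hax (ha v)

/-- Invariant on inner terms: any mode they can reach is `regular`/`leave`/external,
    with restricted final store and restored namespace in the core cases. -/
def RFInv (D : Dialect Val Op Ext Gl) (d : Set Var) (N'' : NS Val Op Ext)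
    (X : Term Val Op Ext) : Prop :=
  ∀ MM G L N G' L' N', IsMode MM → Steps D (X, G, L, N) (MM, G', L', N') →
    (∃ m, MM = Term.ext m) ∨
      ((MM = Term.regular ∨ MM = Term.leave) ∧ Dom L' ⊆ d ∧ N' = N'')

lemma rf_brk_equiv {d : Set Var} {N'' : NS Val Op Ext} {X MM : Term Val Op Ext}
    {G G' : Gl} {L L' : Store Val} {N N' : NS Val Op Ext}
    (hInv : RFInv D d N'' X) (hM : IsMode MM) :
    Steps D (X, G, L, N) (MM, G', L', N') ↔
      Steps D (.brkFrame X, G, L, N) (MM, G', L', N') := by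
  constructor
  · intro h
    have hl := rf_lift (D := D) (.brkC .hole) (by simp) h
    rcases hInv MM G L N G' L' N' hM h with ⟨m, rfl⟩ | ⟨hcore, -, -⟩
    · rcases hl with h1 | ⟨-, h1⟩
      · exact h1.trans (Relation.ReflTransGen.single
          (Step.extProp (.brkC .hole) m _ _ _ (by simp)))
      · exact h1
    · rcases hl with h1 | ⟨⟨m, hm⟩, -⟩
      · refine h1.trans (Relation.ReflTransGen.single ?_)
        exact Step.ctx .hole _ _ _ _ _ _ _ _ (Base.brkPass MM G' L' N' hcore)
      · rcases hcore with rfl | rfl <;> simp at hm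
  · intro h
    obtain ⟨M0, hst, hcase⟩ := rf_brk_inv' hM h
    rcases hcase with ⟨hm, rfl⟩ | ⟨rfl, rfl⟩ | ⟨m, rfl, rfl⟩
    · exact hst
    · rcases hInv _ _ _ _ _ _ _ (Or.inl (Or.inr (Or.inl rfl))) hst with ⟨m, hm⟩ | ⟨h1, -, -⟩
      · simp at hm
      · rcases h1 with h1 | h1 <;> simp at h1
    · exact hst

lemma rf_brk_pres {d : Set Var} {N'' : NS Val Op Ext} {X : Term Val Op Ext}
    (hInv : RFInv D d N'' X) : RFInv D d N'' (.brkFrame X) := by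
  intro MM G L N G' L' N' hM h
  obtain ⟨M0, hst, hcase⟩ := rf_brk_inv' hM h
  rcases hcase with ⟨hm, rfl⟩ | ⟨rfl, rfl⟩ | ⟨m, rfl, rfl⟩
  · rcases hInv _ _ _ _ _ _ _ (rf_mode_of_rl hm) hst with ⟨m, hm2⟩ | ⟨-, h2, h3⟩
    · rcases hm with rfl | rfl <;> simp at hm2
    · exact Or.inr ⟨hm, h2, h3⟩
  · rcases hInv _ _ _ _ _ _ _ (Or.inl (Or.inr (Or.inl rfl))) hst with ⟨m, hm⟩ | ⟨h1, -, -⟩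
    · simp at hm
    · rcases h1 with h1 | h1 <;> simp at h1
  · exact Or.inl ⟨m, rfl⟩

lemma rf_scoped_equiv {d : Set Var} {N'' : NS Val Op Ext} {X MM : Term Val Op Ext}
    {L2 : Store Val} {G G' : Gl} {L L' : Store Val} {N N' : NS Val Op Ext}
    (hInv : RFInv D d N'' X) (hd : d ⊆ Dom L2) (hM : IsMode MM) :
    Steps D (X, G, L, N) (MM, G', L', N') ↔
      Steps D (.scopedBlock [X] L2 N'', G, L, N) (MM, G', L', N') := by
  constructor
  · intro h
    have hl := rf_lift (D := D) (.scopedC .hole [] L2 N'') (by simp) h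
    rcases hInv MM G L N G' L' N' hM h with ⟨m, rfl⟩ | ⟨hcore, hdom, hN⟩
    · rcases hl with h1 | ⟨-, h1⟩
      · exact h1.trans (Relation.ReflTransGen.single
          (Step.extProp (.scopedC .hole [] L2 N'') m _ _ _ (by simp)))
      · exact h1
    · subst hN
      rcases hl with h1 | ⟨⟨m, hm⟩, -⟩
      · refine h1.trans (Relation.ReflTransGen.single ?_)
        have hrw : restrict L' L2 = L' := rf_restrict_self (hdom.trans hd)
        rcases hcore with rfl | rfl
        · have hstep := Step.ctx (D := D) .hole _ _ _ _ _ _ _ _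
            (Base.scopedExitReg L2 N' G' L' N')
          rw [hrw] at hstep
          exact hstep
        · have hstep := Step.ctx (D := D) .hole _ _ _ _ _ _ _ _
            (Base.scopedExitIrr Term.leave [] L2 N' G' L' N' (Or.inr (Or.inr rfl)))
          rw [hrw] at hstep
          exact hstep
      · rcases hcore with rfl | rfl <;> simp at hm
  · intro h
    obtain ⟨M0, G0, L0, N0, hst, hcase⟩ := rf_scoped_inv' hM h
    rcases hcase with ⟨rfl, rfl, rfl, rfl, rfl⟩ | ⟨hirr, rfl, rfl, rfl, rfl⟩ |
      ⟨m, rfl, rfl, rfl, rfl, rfl⟩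
    · rcases hInv _ _ _ _ _ _ _ (Or.inl (Or.inl rfl)) hst with ⟨m, hm⟩ | ⟨-, h2, h3⟩
      · simp at hm
      · rw [rf_restrict_self (h2.trans hd), ← h3]
        exact hst
    · rcases hInv _ _ _ _ _ _ _ (rf_mode_of_irr hirr) hst with ⟨m, hm⟩ | ⟨h1, h2, h3⟩
      · rcases hirr with rfl | rfl | rfl <;> simp at hm
      · rw [rf_restrict_self (h2.trans hd), ← h3]
        exact hst
    · exact hst

lemma rf_scoped_pres {d : Set Var} {N'' : NS Val Op Ext} {X : Term Val Op Ext}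
    {L2 : Store Val} (hInv : RFInv D d N'' X) :
    RFInv D (Dom L2) N'' (.scopedBlock [X] L2 N'') := by
  intro MM G L N G' L' N' hM h
  obtain ⟨M0, G0, L0, N0, hst, hcase⟩ := rf_scoped_inv' hM h
  rcases hcase with ⟨rfl, rfl, rfl, rfl, rfl⟩ | ⟨hirr, rfl, rfl, rfl, rfl⟩ |
    ⟨m, rfl, rfl, rfl, rfl, rfl⟩
  · exact Or.inr ⟨Or.inl rfl, rf_dom_restrict L0 L2, rfl⟩
  · rcases hInv _ _ _ _ _ _ _ (rf_mode_of_irr hirr) hst with ⟨m, hm⟩ | ⟨h1, -, -⟩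
    · rcases hirr with rfl | rfl | rfl <;> simp at hm
    · rcases h1 with rfl | rfl
      · rcases hirr with h | h | h <;> simp at h
      · exact Or.inr ⟨Or.inr rfl, rf_dom_restrict L0 L2, rfl⟩
  · exact Or.inl ⟨m, rfl⟩

lemma rf_main {N'' : NS Val Op Ext} {MM : Term Val Op Ext} {G' : Gl} {L' : Store Val}
    {N' : NS Val Op Ext} (hM : IsMode MM) :
    ∀ (fs : List (Frame Val)) (d : Set Var) (X : Term Val Op Ext) (G : Gl)
      (L : Store Val) (N : NS Val Op Ext), Asc d fs → RFInv D d N'' X →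
    (Steps D (X, G, L, N) (MM, G', L', N') ↔
      Steps D (applyFrames N'' fs X, G, L, N) (MM, G', L', N')) := by
  intro fs
  induction fs with
  | nil => intro d X G L N _ _; exact Iff.rfl
  | cons f fs ih =>
    intro d X G L N ha hI
    cases f with
    | brkF =>
      exact (rf_brk_equiv hI hM).trans
        (ih d (.brkFrame X) G L N ha (rf_brk_pres hI))
    | blockF L2 =>
      obtain ⟨h1, h2⟩ := ha
      exact (rf_scoped_equiv hI h1 hM).trans
        (ih (Dom L2) _ G L N h2 (rf_scoped_pres hI))

lemma rf_T0_inv {S : Term Val Op Ext} {L1 : Store Val} {N'' : NS Val Op Ext} :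
    RFInv D (Dom L1) N'' (.brkFrame (.scopedBlock [S] L1 N'')) := by
  intro MM G L N G' L' N' hM h
  obtain ⟨M0, hst, hcase⟩ := rf_brk_inv' hM h
  rcases hcase with ⟨hm, rfl⟩ | ⟨rfl, rfl⟩ | ⟨m, rfl, rfl⟩
  · obtain ⟨M1, G0, L0, N0, hst2, hc2⟩ := rf_scoped_inv' (rf_mode_of_rl hm) hst
    rcases hc2 with ⟨rfl, rfl, rfl, rfl, rfl⟩ | ⟨hirr, rfl, rfl, rfl, rfl⟩ |
      ⟨m, rfl, rfl, rfl, rfl, rfl⟩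
    · exact Or.inr ⟨hm, rf_dom_restrict L0 L1, rfl⟩
    · exact Or.inr ⟨hm, rf_dom_restrict L0 L1, rfl⟩
    · rcases hm with h | h <;> simp at h
  · obtain ⟨M1, G0, L0, N0, hst2, hc2⟩ := rf_scoped_inv'
      (Or.inl (Or.inr (Or.inl rfl))) hst
    rcases hc2 with ⟨h1, rfl, rfl, rfl, rfl⟩ | ⟨hirr, rfl, rfl, rfl, rfl⟩ |
      ⟨m, hm, rfl, rfl, rfl, rfl⟩
    · simp at h1
    · exact Or.inr ⟨Or.inl rfl, rf_dom_restrict L0 L1, rfl⟩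
    · simp at hm
  · exact Or.inl ⟨m, rfl⟩

end RedundantAux

/-- Redundant frames (case with an innermost break frame):
    if the innermost context of the nesting is `⟦·⟧_brk`, the whole nesting
    is equivalent to just that break frame. -/
theorem redundant_frames_break {Val Op Ext Gl : Type} (D : Dialect Val Op Ext Gl)
    (fs : List (Frame Val)) (N'' : NS Val Op Ext)
    {S MM : Term Val Op Ext} {G G' : Gl} {L L' L₁ : Store Val}
    {N N' : NS Val Op Ext}
    (hasc : Asc (Dom L₁) (Frame.brkF :: fs)) (hM : IsMode MM) :
    Steps D (Term.brkFrame (Term.scopedBlock [S] L₁ N''), G, L, N) (MM, G', L', N') ↔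
      Steps D (applyFrames N'' (Frame.brkF :: fs) (Term.scopedBlock [S] L₁ N''), G, L, N)
        (MM, G', L', N') :=
  rf_main hM fs (Dom L₁) (.brkFrame (.scopedBlock [S] L₁ N'')) G L N hasc rf_T0_inv

end Yul
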